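/- arXiv:1807.03764 — 3 statements merged into one kernel-verified Lean document; each statement's English description precedes it below -/
import Mathlib

section
/- Let ω be a permutation, and let (a₁,b₁),…,(a_m,b_m) be a saturated k-Bruhat chain from ω (that is, a_i ≤ k < b_i for all i, and ℓ(ω t_{a₁,b₁}⋯t_{a_i,b_i}) = ℓ(ω) + i for all 1 ≤ i ≤ m). Suppose for some index i with 2 ≤ i ≤ m we have a_{i-1} < a_i. Then the numbers a_{i-1}, b_{i-1}, a_i, b_i need not all be distinct in general, but if b_{i-1} ≠ b_i then {a_{i-1}, b_{i-1}} ∩ {a_i, b_i} = ∅, and swapping the pairs (a_{i-1},b_{i-1}) and (a_i,b_i) yields another saturated k-Bruhat chain from ω to the same permutation ω t_{a₁,b₁}⋯t_{a_m,b_m}. -/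
/-!
Right multiplication by `t_{a,b}` with `a < b` raises the number of inversions of `u` by exactly
one iff `u a < u b` and no `c ∈ (a, b)` has `u c` strictly between `u a` and `u b`: the only pairs
whose status changes are `(a, b)` and those meeting `(a, b)`, and each middle value contributes
two new inversions while every other value contributes none net.

Because `a_{i-1}, a_i ≤ k < b_{i-1}, b_i`, the hypotheses `a_{i-1} < a_i` and `b_{i-1} ≠ b_i`
make the four indices distinct, so the two transpositions commute and only the new intermediate
permutation `σ t_{a_i,b_i}` has to be checked to be a cover of `σ`. A middle value for it at
`c ≠ b_{i-1}` is also one for the cover `σ t_{a_{i-1},b_{i-1}} ⋖ σ t_{a_{i-1},b_{i-1}} t_{a_i,b_i}`;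
at `c = b_{i-1}` it obstructs either the cover `σ ⋖ σ t_{a_{i-1},b_{i-1}}` or, through
`σ a_{i-1} < σ b_{i-1}`, again the second one.
-/

/-- Coxeter length of a permutation of `Fin n`, as the number of inversions. -/
def len {n : ℕ} (ω : Equiv.Perm (Fin n)) : ℕ :=
  (Finset.univ.filter (fun p : Fin n × Fin n => p.1 < p.2 ∧ ω p.2 < ω p.1)).card

/-- `ω · t_{a₀,b₀} ⋯ t_{a_{i-1},b_{i-1}}`, the `i`-th permutation along the chain. -/
def chainProd {n : ℕ} (ω : Equiv.Perm (Fin n)) (a b : ℕ → Fin n) (i : ℕ) :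
    Equiv.Perm (Fin n) :=
  ω * ((List.range i).map (fun t => Equiv.swap (a t) (b t))).prod

/-- `(a,b)` (with indices `0,…,m-1`) is a saturated `k`-Bruhat chain from `ω`:
each `a_t ≤ k < b_t` and each right multiplication increases the length by 1. -/
def IsSatChain {n : ℕ} (ω : Equiv.Perm (Fin n)) (k : Fin n) (m : ℕ)
    (a b : ℕ → Fin n) : Prop :=
  (∀ t < m, a t ≤ k ∧ k < b t) ∧
  ∀ i ≤ m, len (chainProd ω a b i) = len ω + i

open Finset Equiv

theorem card_filter_and_add_card_filter_and_not {α : Type*} [Fintype α] (P Q R : α → Prop)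
    [DecidablePred P] [DecidablePred Q] [DecidablePred R] :
    #{x | P x ∧ R x} + #{x | Q x ∧ ¬P x ∧ R x} = #{x | Q x ∧ R x} + #{x | P x ∧ ¬Q x ∧ R x} := by
  have hP := card_filter_add_card_filter_not (s := ({x | P x ∧ R x} : Finset α)) Q
  have hQ := card_filter_add_card_filter_not (s := ({x | Q x ∧ R x} : Finset α)) P
  simp only [filter_filter] at hP hQ
  have e1 : #{x | (P x ∧ R x) ∧ Q x} = #{x | (Q x ∧ R x) ∧ P x} := by
    congr 1; ext; simp only [mem_filter]; tauto
  have e2 : #{x | (P x ∧ R x) ∧ ¬ Q x} = #{x | P x ∧ ¬Q x ∧ R x} := by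
    congr 1; ext; simp only [mem_filter]; tauto
  have e3 : #{x | (Q x ∧ R x) ∧ ¬ P x} = #{x | Q x ∧ ¬P x ∧ R x} := by
    congr 1; ext; simp only [mem_filter]; tauto
  omega

theorem card_filter_lt_eq_add {α β : Type*} [LinearOrder β] {S : Finset α} {f : α → β} {x y : β}
    (hxy : x < y) (hx : ∀ c ∈ S, f c ≠ x) :
    #{c ∈ S | f c < y} = #{c ∈ S | f c < x} + #{c ∈ S | x < f c ∧ f c < y} := by
  classical
  rw [← card_union_of_disjoint (disjoint_filter.2 fun c _ h₁ h₂ => lt_asymm h₁ h₂.1)]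
  congr 1
  ext c
  simp only [mem_filter, mem_union]
  grind

theorem card_filter_gt_eq_add {α β : Type*} [LinearOrder β] {S : Finset α} {f : α → β} {x y : β}
    (hxy : x < y) (hy : ∀ c ∈ S, f c ≠ y) :
    #{c ∈ S | x < f c} = #{c ∈ S | x < f c ∧ f c < y} + #{c ∈ S | y < f c} := by
  classical
  rw [← card_union_of_disjoint (disjoint_filter.2 fun c _ h₁ h₂ => lt_asymm h₁.2 h₂)]
  congr 1
  ext c
  simp only [mem_filter, mem_union]
  grind

theorem swap_lt_swap_iff {n : ℕ} {a b : Fin n} (hab : a < b) (x y : Fin n) :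
    x < y ∧ ¬ swap a b x < swap a b y ↔
      (x = a ∧ y = b) ∨ (x = a ∧ a < y ∧ y < b) ∨ (y = b ∧ a < x ∧ x < b) := by
  rw [swap_apply_def, swap_apply_def]
  split_ifs <;> simp only [Fin.lt_def, Fin.ext_iff] at * <;> omega

def lostInversions {n : ℕ} (v : Perm (Fin n)) (a b : Fin n) : Finset (Fin n × Fin n) :=
  {p | p.1 < p.2 ∧ ¬ swap a b p.1 < swap a b p.2 ∧ v p.2 < v p.1}

theorem card_filter_swap_prodMap {n : ℕ} (a b : Fin n) (P : Fin n → Fin n → Prop)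
    [DecidableRel P] :
    #{p : Fin n × Fin n | P (swap a b p.1) (swap a b p.2)} = #{p : Fin n × Fin n | P p.1 p.2} :=
  card_equiv ((swap a b).prodCongr (swap a b)) (by simp)

-- Reindexed by `swap a b`, the inversions that `swap a b` creates in `v` are those it destroys
-- in `v * swap a b`.
theorem len_mul_swap_add_card_lostInversions {n : ℕ} (v : Perm (Fin n)) (a b : Fin n) :
    len (v * swap a b) + #(lostInversions v a b) =
      len v + #(lostInversions (v * swap a b) a b) := by
  have hlen : len (v * swap a b) =
      #{p : Fin n × Fin n | swap a b p.1 < swap a b p.2 ∧ v p.2 < v p.1} := by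
    rw [← card_filter_swap_prodMap a b fun x y => swap a b x < swap a b y ∧ v y < v x]
    simp only [len, swap_apply_self, Perm.mul_apply]
    congr
  have hlost : #(lostInversions (v * swap a b) a b) =
      #{p : Fin n × Fin n | swap a b p.1 < swap a b p.2 ∧ ¬ p.1 < p.2 ∧ v p.2 < v p.1} := by
    rw [← card_filter_swap_prodMap a b fun x y => swap a b x < swap a b y ∧ ¬ x < y ∧ v y < v x]
    simp [lostInversions]
  rw [hlen, hlost, len, lostInversions]
  exact card_filter_and_add_card_filter_and_not _ _ _

theorem lostInversions_eq {n : ℕ} (v : Perm (Fin n)) {a b : Fin n} (hab : a < b) :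
    lostInversions v a b =
      ({(a, b)} : Finset (Fin n × Fin n)).filter (fun p => v p.2 < v p.1) ∪
        {c ∈ Ioo a b | v c < v a}.image (a, ·) ∪ {c ∈ Ioo a b | v b < v c}.image (·, b) := by
  ext ⟨x, y⟩
  simp only [lostInversions, mem_filter, mem_univ, true_and, ← and_assoc, swap_lt_swap_iff hab,
    mem_union, mem_singleton, mem_image, mem_Ioo, Prod.mk.injEq]
  grind

theorem card_lostInversions {n : ℕ} (v : Perm (Fin n)) {a b : Fin n} (hab : a < b) :
    #(lostInversions v a b) = (if v b < v a then 1 else 0) +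
      #{c ∈ Ioo a b | v c < v a} + #{c ∈ Ioo a b | v b < v c} := by
  rw [lostInversions_eq v hab, card_union_of_disjoint, card_union_of_disjoint,
    card_image_of_injective _ (Prod.mk_right_injective a),
    card_image_of_injective _ (Prod.mk_left_injective b), filter_singleton]
  · split_ifs <;> rfl
  all_goals
    simp only [disjoint_left, mem_union, mem_filter, mem_singleton, mem_image, mem_Ioo]
    grind

theorem len_mul_swap_of_lt {n : ℕ} {u : Perm (Fin n)} {a b : Fin n} (hab : a < b)
    (hu : u a < u b) :
    len (u * swap a b) = len u + 1 + 2 * #{c ∈ Ioo a b | u a < u c ∧ u c < u b} := by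
  have key := len_mul_swap_add_card_lostInversions u a b
  have hmid : ∀ c ∈ Ioo a b, c ≠ a ∧ c ≠ b := fun c hc => by
    rw [mem_Ioo] at hc
    exact ⟨hc.1.ne', hc.2.ne⟩
  have hswap : ∀ c ∈ Ioo a b, (u * swap a b) c = u c := fun c hc => by
    rw [Perm.mul_apply, swap_apply_of_ne_of_ne (hmid c hc).1 (hmid c hc).2]
  have hbelow : {c ∈ Ioo a b | (u * swap a b) c < (u * swap a b) a} = {c ∈ Ioo a b | u c < u b} :=
    filter_congr fun c hc => by simp [hswap c hc]
  have habove : {c ∈ Ioo a b | (u * swap a b) b < (u * swap a b) c} = {c ∈ Ioo a b | u a < u c} :=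
    filter_congr fun c hc => by simp [hswap c hc]
  rw [card_lostInversions u hab, card_lostInversions _ hab, hbelow, habove] at key
  simp only [Perm.mul_apply, swap_apply_left, swap_apply_right, if_pos hu,
    if_neg hu.not_gt] at key
  have hlt := card_filter_lt_eq_add hu fun c hc => u.injective.ne (hmid c hc).1
  have hgt := card_filter_gt_eq_add hu fun c hc => u.injective.ne (hmid c hc).2
  omega

theorem len_mul_swap_eq_succ_iff {n : ℕ} {u : Perm (Fin n)} {a b : Fin n} (hab : a < b) :
    len (u * swap a b) = len u + 1 ↔
      u a < u b ∧ ∀ c, a < c → c < b → ¬(u a < u c ∧ u c < u b) := by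
  rcases lt_or_gt_of_ne (u.injective.ne hab.ne) with hu | hu
  · rw [len_mul_swap_of_lt hab hu]
    simp only [hu, true_and, add_eq_left, mul_eq_zero, OfNat.ofNat_ne_zero, false_or,
      card_eq_zero, filter_eq_empty_iff, mem_Ioo, and_imp]
  · have hdown := len_mul_swap_of_lt (u := u * swap a b) hab (by simpa using hu)
    rw [mul_swap_mul_self] at hdown
    exact iff_of_false (by omega) fun h => hu.not_gt h.1

theorem len_mul_swap_eq_succ_of_covers {n : ℕ} {σ : Perm (Fin n)} {a b a' b' : Fin n}
    (haa' : a < a') (ha'b : a' < b) (ha'b' : a' < b') (hbb' : b ≠ b')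
    (h₁ : len (σ * swap a b) = len σ + 1)
    (h₂ : len (σ * swap a b * swap a' b') = len (σ * swap a b) + 1) :
    len (σ * swap a' b') = len σ + 1 := by
  obtain ⟨hσ, hσmid⟩ := (len_mul_swap_eq_succ_iff (haa'.trans ha'b)).1 h₁
  obtain ⟨hτ, hτmid⟩ := (len_mul_swap_eq_succ_iff ha'b').1 h₂
  have hτa' : (σ * swap a b) a' = σ a' := congrArg σ (swap_apply_of_ne_of_ne haa'.ne' ha'b.ne)
  have hτb' : (σ * swap a b) b' = σ b' :=
    congrArg σ (swap_apply_of_ne_of_ne (haa'.trans ha'b').ne' hbb'.symm)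
  have hτb : (σ * swap a b) b = σ a := congrArg σ (swap_apply_right a b)
  rw [hτa', hτb'] at hτ hτmid
  refine (len_mul_swap_eq_succ_iff ha'b').2 ⟨hτ, fun c hc₁ hc₂ ⟨hlo, hhi⟩ => ?_⟩
  by_cases hcb : c = b
  · subst hcb
    rcases lt_or_gt_of_ne (σ.injective.ne haa'.ne) with h | h
    · exact hσmid a' haa' ha'b ⟨h, hlo⟩
    · exact hτmid c hc₁ hc₂ (hτb ▸ ⟨h, hσ.trans hhi⟩)
  · have hτc : (σ * swap a b) c = σ c :=
      congrArg σ (swap_apply_of_ne_of_ne (haa'.trans hc₁).ne' hcb)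
    exact hτmid c hc₁ hc₂ (hτc ▸ ⟨hlo, hhi⟩)

theorem chainProd_succ {n : ℕ} (ω : Perm (Fin n)) (a b : ℕ → Fin n) (t : ℕ) :
    chainProd ω a b (t + 1) = chainProd ω a b t * swap (a t) (b t) := by
  simp [chainProd, List.range_succ, mul_assoc]

theorem chainProd_congr {n : ℕ} {ω : Perm (Fin n)} {a b a' b' : ℕ → Fin n} {p q : ℕ}
    (hpq : p ≤ q) (hp : chainProd ω a b p = chainProd ω a' b' p)
    (h : ∀ t, p ≤ t → t < q → a t = a' t ∧ b t = b' t) :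
    chainProd ω a b q = chainProd ω a' b' q := by
  induction q, hpq using Nat.le_induction with
  | base => exact hp
  | succ q hq ih =>
    obtain ⟨ha, hb⟩ := h q hq q.lt_succ_self
    rw [chainProd_succ, chainProd_succ, ih fun t ht₁ ht₂ => h t ht₁ (ht₂.trans q.lt_succ_self),
      ha, hb]

section AdjacentSwap

variable {n : ℕ} {ω : Perm (Fin n)} {a b : ℕ → Fin n} {j : ℕ}

theorem chainProd_comp_swap_of_le {q : ℕ} (hq : q ≤ j) :
    chainProd ω (a ∘ swap j (j + 1)) (b ∘ swap j (j + 1)) q = chainProd ω a b q :=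
  chainProd_congr (Nat.zero_le q) rfl fun t _ ht => by
    simp [swap_apply_of_ne_of_ne (by omega : t ≠ j) (by omega : t ≠ j + 1)]

theorem chainProd_comp_swap_succ :
    chainProd ω (a ∘ swap j (j + 1)) (b ∘ swap j (j + 1)) (j + 1) =
      chainProd ω a b j * swap (a (j + 1)) (b (j + 1)) := by
  simp [chainProd_succ, chainProd_comp_swap_of_le le_rfl]

theorem chainProd_comp_swap_of_ne
    (hcomm : Commute (swap (a j) (b j)) (swap (a (j + 1)) (b (j + 1)))) {q : ℕ} (hq : q ≠ j + 1) :
    chainProd ω (a ∘ swap j (j + 1)) (b ∘ swap j (j + 1)) q = chainProd ω a b q := by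
  rcases le_or_gt q j with hqj | hqj
  · exact chainProd_comp_swap_of_le hqj
  refine chainProd_congr (p := j + 2) (by omega) ?_ fun t ht _ => ?_
  · simp [chainProd_succ, chainProd_comp_swap_of_le le_rfl, mul_assoc, hcomm.eq]
  · simp [swap_apply_of_ne_of_ne (by omega : t ≠ j) (by omega : t ≠ j + 1)]

end AdjacentSwap

namespace IsSatChain

variable {n : ℕ} {ω : Perm (Fin n)} {k : Fin n} {m : ℕ} {a b : ℕ → Fin n} {j : ℕ}

theorem nodup_adjacent (hchain : IsSatChain ω k m a b) (hj : j + 1 < m)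
    (ha : a j ≠ a (j + 1)) (hb : b j ≠ b (j + 1)) :
    [a j, b j, a (j + 1), b (j + 1)].Nodup := by
  have h₀ := hchain.1 j (by omega)
  have h₁ := hchain.1 (j + 1) hj
  simp only [List.nodup_cons, List.mem_cons, List.not_mem_nil, List.nodup_nil]
  grind

theorem len_chainProd_mul_swap (hchain : IsSatChain ω k m a b) {t : ℕ} (ht : t < m) :
    len (chainProd ω a b t * swap (a t) (b t)) = len (chainProd ω a b t) + 1 := by
  rw [← chainProd_succ, hchain.2 t ht.le, hchain.2 (t + 1) ht]
  rfl

theorem comp_swap (hchain : IsSatChain ω k m a b) (hj : j + 1 < m)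
    (ha : a j < a (j + 1)) (hb : b j ≠ b (j + 1)) :
    IsSatChain ω k m (a ∘ swap j (j + 1)) (b ∘ swap j (j + 1)) := by
  have hcomm := (Perm.disjoint_swap_swap (hchain.nodup_adjacent hj ha.ne hb)).commute
  have h₀ := hchain.1 j (by omega)
  have h₁ := hchain.1 (j + 1) hj
  have hcover : len (chainProd ω a b j * swap (a (j + 1)) (b (j + 1))) =
      len (chainProd ω a b j) + 1 := by
    refine len_mul_swap_eq_succ_of_covers ha (h₁.1.trans_lt h₀.2) (h₁.1.trans_lt h₁.2) hb
      (hchain.len_chainProd_mul_swap (by omega)) ?_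
    rw [← chainProd_succ]
    exact hchain.len_chainProd_mul_swap hj
  refine ⟨fun t ht => hchain.1 _ ?_, fun q hq => ?_⟩
  · rw [swap_apply_def]
    split_ifs <;> omega
  · by_cases hqj : q = j + 1
    · rw [hqj, chainProd_comp_swap_succ, hcover, hchain.2 j (by omega)]
      rfl
    · rw [chainProd_comp_swap_of_ne hcomm hqj]
      exact hchain.2 q hq

end IsSatChain

theorem stmt5 {n : ℕ} (ω : Equiv.Perm (Fin n)) (k : Fin n) (m : ℕ)
    (a b : ℕ → Fin n) (hchain : IsSatChain ω k m a b)
    (i : ℕ) (hi1 : 1 ≤ i) (him : i < m)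
    (ha : a (i - 1) < a i) (hb : b (i - 1) ≠ b i) :
    (({a (i - 1), b (i - 1)} : Finset (Fin n)) ∩ {a i, b i} = ∅) ∧
    IsSatChain ω k m
      (Function.update (Function.update a (i - 1) (a i)) i (a (i - 1)))
      (Function.update (Function.update b (i - 1) (b i)) i (b (i - 1))) ∧
    chainProd ω
      (Function.update (Function.update a (i - 1) (a i)) i (a (i - 1)))
      (Function.update (Function.update b (i - 1) (b i)) i (b (i - 1))) m
      = chainProd ω a b m := by
  obtain ⟨j, rfl⟩ : ∃ j, i = j + 1 := ⟨i - 1, by omega⟩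
  rw [Nat.add_sub_cancel] at ha hb ⊢
  rw [← comp_swap_eq_update, ← comp_swap_eq_update, swap_comm]
  have hnodup := hchain.nodup_adjacent him ha.ne hb
  refine ⟨?_, hchain.comp_swap him ha hb,
    chainProd_comp_swap_of_ne (Perm.disjoint_swap_swap hnodup).commute (by omega)⟩
  simp only [List.nodup_cons, List.mem_cons, List.not_mem_nil, List.nodup_nil] at hnodup
  ext x
  simp only [mem_inter, mem_insert, mem_singleton, notMem_empty, iff_false]
  grind
end

section
/- Two words α = α₁…α_p and β = β₁…β_q over the positive integers give the same permutation s_{α₁}⋯s_{α_p} = s_{β₁}⋯s_{β_q} if and only if they are connected by a finite sequence of braid moves (s_i s_j = s_j s_i for |i−j| ≥ 2, and s_i s_{i+1} s_i = s_{i+1} s_i s_{i+1}) together with insertions or deletions of consecutive equal pairs s_i s_i. -/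
/-!
The generators `s_i` satisfy the quadratic, commutation and braid relations, so moves preserve
the product. Conversely, a permutation `π` fixing every `x > n` factors as `σ * s_{n-1} ⋯ s_k`
with `k = π⁻¹ n` and `σ` fixing every `x ≥ n`; iterating yields a normal-form word depending only
on `π`. For `i < n - 1`, a descending block `s_{n-1} ⋯ s_k` times `s_i` is, up to moves, either
another descending block or `s_j s_{n-1} ⋯ s_k` with `j < n - 1`. So a letter appended to a normal
form can be pushed down through the blocks, giving the normal form of the product, and by
induction every word is move-equivalent to the normal form of its product.
-/

/-- The adjacent transposition `s_i = (i, i+1)` on the natural numbers. -/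
def sw (i : ℕ) : Equiv.Perm ℕ := Equiv.swap i (i + 1)

/-- The product of the word `α`, i.e. `s_{α₁} ⋯ s_{α_p}`. -/
def prodWord (l : List ℕ) : Equiv.Perm ℕ := (l.map sw).prod

/-- Elementary moves on words: commutation `s_i s_j = s_j s_i` for `|i-j| ≥ 2`,
braid move `s_i s_{i+1} s_i = s_{i+1} s_i s_{i+1}`, and cancellation of a
consecutive equal pair `s_i s_i` (insertion being the symmetric move). -/
inductive BraidStep : List ℕ → List ℕ → Prop
  | comm (l r : List ℕ) (i j : ℕ) (h : i + 2 ≤ j) :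
      BraidStep (l ++ [i, j] ++ r) (l ++ [j, i] ++ r)
  | braid (l r : List ℕ) (i : ℕ) :
      BraidStep (l ++ [i, i + 1, i] ++ r) (l ++ [i + 1, i, i + 1] ++ r)
  | cancel (l r : List ℕ) (i : ℕ) :
      BraidStep (l ++ [i, i] ++ r) (l ++ r)

infix:50 " ≈ᵇ " => Relation.EqvGen BraidStep

@[simp] lemma prodWord_nil : prodWord [] = 1 := rfl

@[simp] lemma prodWord_cons (i : ℕ) (l : List ℕ) : prodWord (i :: l) = sw i * prodWord l := by
  simp [prodWord]

@[simp] lemma prodWord_append (l r : List ℕ) : prodWord (l ++ r) = prodWord l * prodWord r := by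
  simp [prodWord]

lemma sw_apply_of_ne {i x : ℕ} (h₁ : x ≠ i) (h₂ : x ≠ i + 1) : sw i x = x :=
  Equiv.swap_apply_of_ne_of_ne h₁ h₂

lemma sw_mul_self (i : ℕ) : sw i * sw i = 1 := Equiv.swap_mul_self _ _

lemma sw_mul_comm {i j : ℕ} (h : i + 2 ≤ j) : sw i * sw j = sw j * sw i := by
  ext x
  simp only [sw, Equiv.Perm.mul_apply, Equiv.swap_apply_def]
  split_ifs <;> omega

lemma sw_braid (i : ℕ) : sw i * sw (i + 1) * sw i = sw (i + 1) * sw i * sw (i + 1) := by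
  ext x
  simp only [sw, Equiv.Perm.mul_apply, Equiv.swap_apply_def]
  split_ifs <;> omega

lemma prodWord_apply_of_forall_ne {x : ℕ} :
    ∀ {l : List ℕ}, (∀ j ∈ l, x ≠ j ∧ x ≠ j + 1) → prodWord l x = x
  | [], _ => rfl
  | i :: l, h => by
    simp only [List.mem_cons, forall_eq_or_imp] at h
    rw [prodWord_cons, Equiv.Perm.mul_apply, prodWord_apply_of_forall_ne h.2,
      sw_apply_of_ne h.1.1 h.1.2]

lemma BraidStep.prodWord_eq {a b : List ℕ} (h : BraidStep a b) : prodWord a = prodWord b := by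
  cases h with
  | comm l r i j h => simp only [prodWord_append]; congr 2; simpa using sw_mul_comm h
  | braid l r i => simp only [prodWord_append]; congr 2; simpa [mul_assoc] using sw_braid i
  | cancel l r i => simp [← mul_assoc (sw i), sw_mul_self]

lemma prodWord_eq_of_braidEqv {a b : List ℕ} (h : a ≈ᵇ b) : prodWord a = prodWord b := by
  induction h with
  | rel _ _ h => exact h.prodWord_eq
  | refl => rfl
  | symm _ _ _ ih => exact ih.symm
  | trans _ _ _ _ _ ih₁ ih₂ => exact ih₁.trans ih₂

lemma BraidStep.append_append (l r : List ℕ) {a b : List ℕ} (h : BraidStep a b) :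
    BraidStep (l ++ a ++ r) (l ++ b ++ r) := by
  cases h with
  | comm l' r' i j h => simpa using BraidStep.comm (l ++ l') (r' ++ r) i j h
  | braid l' r' i => simpa using BraidStep.braid (l ++ l') (r' ++ r) i
  | cancel l' r' i => simpa using BraidStep.cancel (l ++ l') (r' ++ r) i

lemma braidEqv_append_append (l r : List ℕ) {a b : List ℕ} (h : a ≈ᵇ b) :
    l ++ a ++ r ≈ᵇ l ++ b ++ r := by
  induction h with
  | rel _ _ h => exact .rel _ _ (h.append_append l r)
  | refl => exact .refl _
  | symm _ _ _ ih => exact .symm _ _ ih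
  | trans _ _ _ _ _ ih₁ ih₂ => exact .trans _ _ _ ih₁ ih₂

lemma braidEqv_append {a b c d : List ℕ} (h₁ : a ≈ᵇ b) (h₂ : c ≈ᵇ d) : a ++ c ≈ᵇ b ++ d :=
  calc a ++ c ≈ᵇ b ++ c := by simpa using braidEqv_append_append [] c h₁
    _ ≈ᵇ b ++ d := by simpa using braidEqv_append_append b [] h₂

lemma braidEqv_cons_of_forall_far {i : ℕ} :
    ∀ {w : List ℕ}, (∀ j ∈ w, i + 2 ≤ j ∨ j + 2 ≤ i) → i :: w ≈ᵇ w ++ [i]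
  | [], _ => .refl _
  | j :: w, h => by
    simp only [List.mem_cons, forall_eq_or_imp] at h
    have hij : [i, j] ≈ᵇ [j, i] := by
      rcases h.1 with hij | hji
      · simpa using Relation.EqvGen.rel _ _ (BraidStep.comm [] [] i j hij)
      · simpa using Relation.EqvGen.symm _ _ (.rel _ _ (BraidStep.comm [] [] j i hji))
    calc i :: j :: w ≈ᵇ j :: i :: w := braidEqv_append hij (.refl w)
      _ ≈ᵇ j :: (w ++ [i]) := braidEqv_append (.refl [j]) (braidEqv_cons_of_forall_far h.2)

/-- The descending word `[n - 1, n - 2, …, k]`, empty when `n ≤ k`. -/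
def descWord (k n : ℕ) : List ℕ := (List.range' k (n - k)).reverse

lemma mem_descWord {j k n : ℕ} : j ∈ descWord k n ↔ k ≤ j ∧ j < n := by
  simp only [descWord, List.mem_reverse, List.mem_range'_1]
  omega

@[simp] lemma descWord_self (n : ℕ) : descWord n n = [] := by simp [descWord]

@[simp] lemma descWord_succ_self (n : ℕ) : descWord n (n + 1) = [n] := by simp [descWord]

lemma descWord_append {k m n : ℕ} (hkm : k ≤ m) (hmn : m ≤ n) :
    descWord m n ++ descWord k m = descWord k n := by
  have := List.range'_append_1 (s := k) (m := m - k) (n := n - m)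
  rw [Nat.add_sub_cancel' hkm, show m - k + (n - m) = n - k by omega] at this
  rw [descWord, descWord, descWord, ← this, List.reverse_append]

lemma prodWord_descWord_apply_self {k n : ℕ} (h : k ≤ n) : prodWord (descWord k n) k = n := by
  induction n, h using Nat.le_induction with
  | base => simp
  | succ n hkn ih =>
    rw [← descWord_append hkn n.le_succ, descWord_succ_self, prodWord_append,
      Equiv.Perm.mul_apply, ih]
    exact Equiv.swap_apply_left _ _

lemma descWord_eq_of_le {k j n : ℕ} (hkj : k ≤ j) (hjn : j + 2 ≤ n) :
    descWord k n = descWord (j + 2) n ++ [j + 1, j] ++ descWord k j := by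
  rw [← descWord_append (by omega : k ≤ j + 2) hjn, ← descWord_append (by omega : k ≤ j + 1)
    (j + 1).le_succ, ← descWord_append hkj j.le_succ, descWord_succ_self, descWord_succ_self]
  simp

lemma descWord_append_singleton_braidEqv_of_le {k j n : ℕ} (hkj : k ≤ j) (hjn : j + 2 ≤ n) :
    descWord k n ++ [j + 1] ≈ᵇ j :: descWord k n := by
  have far_low : ∀ x ∈ descWord k j, j + 1 + 2 ≤ x ∨ x + 2 ≤ j + 1 := fun x hx => by
    have := mem_descWord.1 hx; omega
  have far_high : ∀ x ∈ descWord (j + 2) n, j + 2 ≤ x ∨ x + 2 ≤ j := fun x hx => by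
    have := mem_descWord.1 hx; omega
  rw [descWord_eq_of_le hkj hjn]
  calc descWord (j + 2) n ++ [j + 1, j] ++ descWord k j ++ [j + 1]
      ≈ᵇ descWord (j + 2) n ++ [j + 1, j] ++ ((j + 1) :: descWord k j) := by
        simpa using braidEqv_append_append (descWord (j + 2) n ++ [j + 1, j]) []
          (Relation.EqvGen.symm _ _ (braidEqv_cons_of_forall_far far_low))
    _ ≈ᵇ descWord (j + 2) n ++ [j, j + 1, j] ++ descWord k j := by
        simpa using Relation.EqvGen.symm _ _
          (.rel _ _ (BraidStep.braid (descWord (j + 2) n) (descWord k j) j))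
    _ ≈ᵇ j :: (descWord (j + 2) n ++ [j + 1, j] ++ descWord k j) := by
        simpa using braidEqv_append_append [] ([j + 1, j] ++ descWord k j)
          (Relation.EqvGen.symm _ _ (braidEqv_cons_of_forall_far far_high))

lemma descWord_append_singleton_braidEqv {k n i : ℕ} (hk : k ≤ n) (hi : i < n) :
    (∃ j, j + 2 ≤ n ∧ descWord k n ++ [i] ≈ᵇ j :: descWord k n) ∨
      ∃ k' ≤ n, descWord k n ++ [i] ≈ᵇ descWord k' n := by
  rcases lt_trichotomy (i + 1) k with hik | hik | hki
  · refine .inl ⟨i, by omega, .symm _ _ (braidEqv_cons_of_forall_far fun x hx => ?_)⟩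
    have := mem_descWord.1 hx; omega
  · subst hik
    refine .inr ⟨i, by omega, ?_⟩
    rw [← descWord_succ_self, descWord_append i.le_succ hk]
    exact .refl _
  rcases eq_or_lt_of_le (Nat.lt_succ_iff.1 hki) with rfl | hki
  · refine .inr ⟨k + 1, hi, ?_⟩
    rw [← descWord_append k.le_succ hi, descWord_succ_self]
    simpa using Relation.EqvGen.rel _ _ (BraidStep.cancel (descWord (k + 1) n) [] k)
  · obtain ⟨j, rfl⟩ : ∃ j, i = j + 1 := ⟨i - 1, by omega⟩
    exact .inl ⟨j, by omega, descWord_append_singleton_braidEqv_of_le (by omega) (by omega)⟩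

/-- The block `descWord (π⁻¹ n) n` represents the right coset of `π` modulo the stabiliser of
`n`: its product sends `π⁻¹ n` to `n`, so the remaining factor fixes `n`. -/
def normalForm : ℕ → Equiv.Perm ℕ → List ℕ
  | 0, _ => []
  | n + 1, π => normalForm n (π * (prodWord (descWord (π⁻¹ n) n))⁻¹) ++ descWord (π⁻¹ n) n

lemma normalForm_mul_prodWord_descWord {n k : ℕ} {σ : Equiv.Perm ℕ}
    (hσ : ∀ x ≥ n, σ x = x) (hk : k ≤ n) :
    normalForm (n + 1) (σ * prodWord (descWord k n)) = normalForm n σ ++ descWord k n := by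
  have hk' : (σ * prodWord (descWord k n))⁻¹ n = k := by
    rw [mul_inv_rev, Equiv.Perm.mul_apply, Equiv.Perm.inv_eq_iff_eq.2 (hσ n le_rfl).symm,
      Equiv.Perm.inv_eq_iff_eq, prodWord_descWord_apply_self hk]
  rw [normalForm, hk', mul_inv_cancel_right]

lemma exists_eq_mul_prodWord_descWord {n : ℕ} {π : Equiv.Perm ℕ}
    (hπ : ∀ x ≥ n + 1, π x = x) :
    ∃ σ : Equiv.Perm ℕ, ∃ k ≤ n, (∀ x ≥ n, σ x = x) ∧ π = σ * prodWord (descWord k n) := by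
  have hk : π⁻¹ n ≤ n := by
    by_contra! h
    have := (Equiv.Perm.inv_eq_iff_eq.1 rfl).trans (hπ _ h)
    omega
  refine ⟨π * (prodWord (descWord (π⁻¹ n) n))⁻¹, π⁻¹ n, hk, fun x hx => ?_, by group⟩
  rcases hx.eq_or_lt with rfl | hx
  · rw [Equiv.Perm.mul_apply,
      Equiv.Perm.inv_eq_iff_eq.2 (prodWord_descWord_apply_self hk).symm]
    simp
  · have hfix : prodWord (descWord (π⁻¹ n) n) x = x :=
      prodWord_apply_of_forall_ne fun j hj => by have := mem_descWord.1 hj; omega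
    rw [Equiv.Perm.mul_apply, Equiv.Perm.inv_eq_iff_eq.2 hfix.symm, hπ x hx]

lemma normalForm_one (n : ℕ) : normalForm n 1 = [] := by
  induction n with
  | zero => rfl
  | succ n ih =>
    simpa [ih] using normalForm_mul_prodWord_descWord (σ := 1) (n := n) (fun _ _ => rfl) le_rfl

lemma normalForm_append_singleton_braidEqv {n i : ℕ} {π : Equiv.Perm ℕ}
    (hπ : ∀ x ≥ n, π x = x) (hi : i + 2 ≤ n) :
    normalForm n π ++ [i] ≈ᵇ normalForm n (π * sw i) := by
  induction n generalizing π i with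
  | zero => omega
  | succ n ih =>
    obtain ⟨σ, k, hk, hσ, rfl⟩ := exists_eq_mul_prodWord_descWord hπ
    have hprod : σ * prodWord (descWord k n) * sw i = σ * prodWord (descWord k n ++ [i]) := by
      simp [mul_assoc]
    rw [normalForm_mul_prodWord_descWord hσ hk, hprod, List.append_assoc]
    rcases descWord_append_singleton_braidEqv hk (by omega : i < n) with
      ⟨j, hj, h⟩ | ⟨k', hk', h⟩
    · have hσj : ∀ x ≥ n, (σ * sw j) x = σ x := fun x hx => by
        rw [Equiv.Perm.mul_apply, sw_apply_of_ne (by omega) (by omega)]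
      rw [prodWord_eq_of_braidEqv h, prodWord_cons, ← mul_assoc,
        normalForm_mul_prodWord_descWord (fun x hx => (hσj x hx).trans (hσ x hx)) hk]
      calc normalForm n σ ++ (descWord k n ++ [i])
          ≈ᵇ normalForm n σ ++ [j] ++ descWord k n := by
            simpa using braidEqv_append (.refl (normalForm n σ)) h
        _ ≈ᵇ normalForm n (σ * sw j) ++ descWord k n :=
            braidEqv_append (ih hσ hj) (.refl _)
    · rw [prodWord_eq_of_braidEqv h, normalForm_mul_prodWord_descWord hσ hk']
      exact braidEqv_append (.refl _) h

lemma braidEqv_normalForm_prodWord {n : ℕ} (l : List ℕ) (hl : ∀ i ∈ l, i + 2 ≤ n) :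
    l ≈ᵇ normalForm n (prodWord l) := by
  induction l using List.reverseRecOn with
  | nil => rw [prodWord_nil, normalForm_one]; exact .refl _
  | append_singleton l i ih =>
    simp only [List.mem_append, List.mem_singleton] at hl
    have hfix : ∀ x ≥ n, prodWord l x = x := fun x hx =>
      prodWord_apply_of_forall_ne fun j hj => by have := hl j (.inl hj); omega
    rw [prodWord_append, prodWord_cons, prodWord_nil, mul_one]
    exact .trans _ _ _ (braidEqv_append (ih fun j hj => hl j (.inl hj)) (.refl [i]))
      (normalForm_append_singleton_braidEqv hfix (hl i (.inr rfl)))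

theorem stmt7 (α β : List ℕ) :
    prodWord α = prodWord β ↔ Relation.EqvGen BraidStep α β := by
  refine ⟨fun h => ?_, prodWord_eq_of_braidEqv⟩
  have hbound : ∀ i ∈ α ++ β, i + 2 ≤ (α ++ β).sum + 2 := fun i hi =>
    Nat.add_le_add_right (List.le_sum_of_mem hi) 2
  have hα := braidEqv_normalForm_prodWord α fun i hi => hbound i (List.mem_append_left β hi)
  have hβ := braidEqv_normalForm_prodWord β fun i hi => hbound i (List.mem_append_right α hi)
  rw [h] at hα
  exact .trans _ _ _ hα (.symm _ _ hβ)
end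

section
/- Let ω be a permutation and let t_{i,j}, t_{i',j'} be transpositions with i < j, i' < j', such that ℓ(ω t_{i,j}) = ℓ(ω)+1, ℓ(ω t_{i,j} t_{i',j'}) = ℓ(ω)+2, and {i,j} ∩ {i',j'} = ∅. Then also ℓ(ω t_{i',j'}) = ℓ(ω)+1 and ℓ(ω t_{i',j'} t_{i,j}) = ℓ(ω)+2, and ω t_{i,j} t_{i',j'} = ω t_{i',j'} t_{i,j}. -/
open Finset Equiv

theorem Fintype.sum_prod_eq_of_eq_zero_off_pair {α M : Type*} [Fintype α] [DecidableEq α]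
    [AddCommMonoid M] {g : α × α → M} {x y : α} (hxy : x ≠ y)
    (hg : ∀ a b, a ∉ ({x, y} : Finset α) → b ∉ ({x, y} : Finset α) → g (a, b) = 0) :
    ∑ p, g p = g (x, x) + g (x, y) + g (y, x) + g (y, y) +
      ∑ k ∈ ({x, y} : Finset α)ᶜ, (g (x, k) + g (k, x) + g (y, k) + g (k, y)) := by
  set s : Finset α := {x, y}
  have hoff : ∀ a ∈ sᶜ, ∑ b ∈ sᶜ, g (a, b) = 0 := fun a ha =>
    Finset.sum_eq_zero fun b hb => hg a b (mem_compl.1 ha) (mem_compl.1 hb)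
  rw [Fintype.sum_prod_type, ← sum_add_sum_compl s]
  simp only [← sum_add_sum_compl s (fun b => g (_, b)), sum_add_distrib, Finset.sum_eq_zero hoff]
  simp only [s, sum_pair hxy, sum_add_distrib]
  abel

/-- Exchanging the values `u = π x` and `v = π y` changes the inversion indicators of the pairs
`(x, k)`, `(k, x)`, `(y, k)`, `(k, y)` by the four bracketed differences. -/
theorem inversion_change_through_swap {α β : Type*} [LinearOrder α] [LinearOrder β] {x y k : α}
    {u v w : β} (hxy : x < y) (huv : u < v) (hkx : k ≠ x) (hky : k ≠ y) (hwu : w ≠ u)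
    (hwv : w ≠ v) :
    (((if x < k ∧ w < v then 1 else 0) - if x < k ∧ w < u then 1 else 0) +
      ((if k < x ∧ v < w then 1 else 0) - if k < x ∧ u < w then 1 else 0) +
      ((if y < k ∧ w < u then 1 else 0) - if y < k ∧ w < v then 1 else 0) +
      ((if k < y ∧ u < w then 1 else 0) - if k < y ∧ v < w then 1 else 0) : ℤ) =
      2 * if x < k ∧ k < y ∧ u < w ∧ w < v then 1 else 0 := by
  rcases hkx.lt_or_gt with hk | hk <;> rcases hky.lt_or_gt with hk' | hk' <;>
    rcases hwu.lt_or_gt with hw | hw <;> rcases hwv.lt_or_gt with hw' | hw' <;>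
    simp [hk, hk', hw, hw', hk.not_gt, hk'.not_gt, hw.not_gt, hw'.not_gt] <;> order

theorem len_eq_sum_ite {n : ℕ} (π : Perm (Fin n)) :
    (len π : ℤ) = ∑ p : Fin n × Fin n, if p.1 < p.2 ∧ π p.2 < π p.1 then 1 else 0 := by
  rw [len, card_filter, Nat.cast_sum]
  push_cast
  rfl

theorem len_mul_swap_of_lt_s13 {n : ℕ} (π : Perm (Fin n)) {x y : Fin n} (hxy : x < y)
    (hπ : π x < π y) :
    len (π * swap x y) = len π + 1 + 2 * #{k | x < k ∧ k < y ∧ π x < π k ∧ π k < π y} := by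
  set σ := π * swap x y
  have hσx : σ x = π y := by simp [σ]
  have hσy : σ y = π x := by simp [σ]
  have hσk : ∀ k ∉ ({x, y} : Finset (Fin n)), σ k = π k := fun k hk => by
    simp only [mem_insert, mem_singleton, not_or] at hk
    simp [σ, swap_apply_of_ne_of_ne hk.1 hk.2]
  suffices h : (len σ : ℤ) - len π =
      1 + 2 * #{k | x < k ∧ k < y ∧ π x < π k ∧ π k < π y} by omega
  rw [len_eq_sum_ite, len_eq_sum_ite, ← sum_sub_distrib,
    Fintype.sum_prod_eq_of_eq_zero_off_pair hxy.ne fun a b ha hb => by simp [hσk a ha, hσk b hb]]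
  have hcard : (#{k | x < k ∧ k < y ∧ π x < π k ∧ π k < π y} : ℤ) =
      ∑ k ∈ ({x, y} : Finset (Fin n))ᶜ, if x < k ∧ k < y ∧ π x < π k ∧ π k < π y then 1 else 0 := by
    rw [card_filter, Nat.cast_sum]
    push_cast
    refine (sum_subset (subset_univ _) fun k _ hk => ?_).symm
    simp only [mem_compl, not_not, mem_insert, mem_singleton] at hk
    rcases hk with rfl | rfl <;> simp
  rw [hcard, mul_sum]
  simp only [hσx, hσy, lt_irrefl, if_false, sub_self, hxy, hπ, if_true,
    not_lt_of_gt hπ, not_lt_of_gt hxy, and_false, and_true, zero_add, sub_zero, add_zero]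
  refine congrArg (1 + ·) (sum_congr rfl fun k hk => ?_)
  rw [hσk k (mem_compl.1 hk)]
  simp only [mem_compl, mem_insert, mem_singleton, not_or] at hk
  exact inversion_change_through_swap hxy hπ hk.1 hk.2 (π.injective.ne hk.1) (π.injective.ne hk.2)

def IsSwapCover {α : Type*} [LinearOrder α] (π : Perm α) (x y : α) : Prop :=
  π x < π y ∧ ∀ k, x < k → k < y → ¬(π x < π k ∧ π k < π y)

theorem len_mul_swap_eq_add_one_iff {n : ℕ} (π : Perm (Fin n)) {x y : Fin n} (hxy : x < y) :
    len (π * swap x y) = len π + 1 ↔ IsSwapCover π x y := by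
  rcases lt_or_gt_of_ne (π.injective.ne hxy.ne) with hπ | hπ
  · simp [len_mul_swap_of_lt_s13 π hxy hπ, IsSwapCover, hπ, filter_eq_empty_iff]
  · have h := len_mul_swap_of_lt_s13 (π * swap x y) hxy (by simpa using hπ)
    rw [mul_swap_mul_self] at h
    simp only [IsSwapCover, hπ.not_gt, false_and, iff_false]
    omega

theorem IsSwapCover.of_mul_swap {α : Type*} [LinearOrder α] {π : Perm α} {i j i' j' : α}
    (hij : i < j) (h1 : i ≠ i') (h2 : i ≠ j') (h3 : j ≠ i') (h4 : j ≠ j')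
    (h : IsSwapCover π i j) (h' : IsSwapCover (π * swap i j) i' j') : IsSwapCover π i' j' := by
  obtain ⟨hπ, hπk⟩ := h
  obtain ⟨hσ, hσk⟩ := h'
  simp only [Perm.mul_apply, swap_apply_of_ne_of_ne h1.symm h3.symm,
    swap_apply_of_ne_of_ne h2.symm h4.symm] at hσ hσk
  refine ⟨hσ, fun k hk hk' ⟨hlt, hlt'⟩ => ?_⟩
  by_cases hki : k = i
  · subst hki
    have hσi := hσk k hk hk'
    rw [swap_apply_left] at hσi
    have hj'j : π j' < π j := lt_of_le_of_ne (not_lt.1 fun hj => hσi ⟨hlt.trans hπ, hj⟩)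
      (π.injective.ne h4.symm)
    rcases h4.lt_or_gt with hj | hj
    · have hσj := hσk j (hk.trans hij) hj
      rw [swap_apply_right] at hσj
      exact hσj ⟨hlt, hlt'⟩
    · exact hπk j' hk' hj ⟨hlt', hj'j⟩
  by_cases hkj : k = j
  · subst hkj
    have hσj := hσk k hk hk'
    rw [swap_apply_right] at hσj
    have hii' : π i < π i' := lt_of_le_of_ne (not_lt.1 fun hi => hσj ⟨hi, hπ.trans hlt'⟩)
      (π.injective.ne h1)
    rcases h1.lt_or_gt with hi | hi
    · exact hπk i' hi hk ⟨hii', hlt⟩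
    · have hσi := hσk i hi (hij.trans hk')
      rw [swap_apply_left] at hσi
      exact hσi ⟨hlt, hlt'⟩
  exact hσk k hk hk' (by rwa [swap_apply_of_ne_of_ne hki hkj])

theorem stmt13 {n : ℕ} (ω : Equiv.Perm (Fin n)) (i j i' j' : Fin n)
    (hij : i < j) (hij' : i' < j')
    (h1 : i ≠ i') (h2 : i ≠ j') (h3 : j ≠ i') (h4 : j ≠ j')
    (hl1 : len (ω * Equiv.swap i j) = len ω + 1)
    (hl2 : len (ω * Equiv.swap i j * Equiv.swap i' j') = len ω + 2) :
    len (ω * Equiv.swap i' j') = len ω + 1 ∧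
    len (ω * Equiv.swap i' j' * Equiv.swap i j) = len ω + 2 ∧
    ω * Equiv.swap i j * Equiv.swap i' j' = ω * Equiv.swap i' j' * Equiv.swap i j := by
  have hcomm : ω * swap i j * swap i' j' = ω * swap i' j' * swap i j := by
    rw [mul_assoc, (Perm.disjoint_swap_swap (by simp [h1, h2, h3, h4, hij.ne, hij'.ne])).commute.eq, ← mul_assoc]
  have hcover : IsSwapCover ω i j := (len_mul_swap_eq_add_one_iff ω hij).1 hl1
  have hcover' : IsSwapCover (ω * swap i j) i' j' :=
    (len_mul_swap_eq_add_one_iff _ hij').1 (by rw [hl2, hl1])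
  exact ⟨(len_mul_swap_eq_add_one_iff ω hij').2 (hcover.of_mul_swap hij h1 h2 h3 h4 hcover'),
    by rw [← hcomm, hl2], hcomm⟩
end
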